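/- arXiv:2401.12856 — 5 statements merged into one kernel-verified Lean document; each statement's English description precedes it below -/
import Mathlib

section
/- Let μ(x) = x for x ≥ 0 and μ(x) = λx for x < 0 with λ ≥ 1, let m : (0,∞) → ℝ be differentiable and strictly increasing, and let C̃ be a random variable with continuous CDF F such that m(C̃) is integrable. Then for every c > 0 at which F is continuous, the function c ↦ E[μ(m(c) − m(C̃))] is differentiable with derivative (F(c) + λ(1 − F(c)))·m′(c). -/
open MeasureTheory

/-- Let `μ(x) = x` for `x ≥ 0` and `μ(x) = λx` for `x < 0` with `λ ≥ 1`; let `m` be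
differentiable and strictly increasing on `(0,∞)`, and let `C̃` be a positive random
variable with continuous CDF `F` such that `m(C̃)` is integrable. Then at every `c > 0`
where `F` is continuous, `c ↦ E[μ(m(c) − m(C̃))]` is differentiable with derivative
`(F(c) + λ(1 − F(c)))·m′(c)`. -/
theorem gainLoss_expected_derivative
    {Ω : Type*} [MeasurableSpace Ω] (P : Measure Ω) [IsProbabilityMeasure P]
    (lam : ℝ) (hlam : 1 ≤ lam)
    (gl : ℝ → ℝ) (hgl : ∀ x : ℝ, gl x = if 0 ≤ x then x else lam * x)
    (m : ℝ → ℝ) (hmdiff : ∀ x ∈ Set.Ioi (0 : ℝ), DifferentiableAt ℝ m x)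
    (hmono : StrictMonoOn m (Set.Ioi (0 : ℝ)))
    (Ctil : Ω → ℝ) (hCpos : ∀ ω, 0 < Ctil ω)
    (hmeas : Measurable Ctil)
    (hInt : Integrable (fun ω => m (Ctil ω)) P)
    (F : ℝ → ℝ) (hF : ∀ x, F x = (P {ω | Ctil ω ≤ x}).toReal)
    (hFcont : Continuous F)
    (c : ℝ) (hc : 0 < c) (hFcontAt : ContinuousAt F c) :
    HasDerivAt (fun c' => ∫ ω, gl (m c' - m (Ctil ω)) ∂P)
      ((F c + lam * (1 - F c)) * deriv m c) c := by
  have hlam0 : (0:ℝ) < lam := lt_of_lt_of_le one_pos hlam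
  set X : Ω → ℝ := fun ω => m (Ctil ω) with hX
  set t₀ : ℝ := m c with ht₀
  -- continuity of gl
  have hgl_fun : gl = fun x => if 0 ≤ x then x else lam * x := funext hgl
  have hglcont : Continuous gl := by
    rw [hgl_fun]
    apply Continuous.if_le continuous_id (continuous_const.mul continuous_id)
      continuous_const continuous_id
    intro x h
    simp only [id_eq] at h
    rw [← h]
    simp
  -- measurability of X
  have hmcont : ContinuousOn m (Set.Ioi (0:ℝ)) := fun x hx =>
    (hmdiff x hx).continuousAt.continuousWithinAt
  have hXmeas : Measurable X := by
    have h1 : Measurable (fun ω => (⟨Ctil ω, hCpos ω⟩ : Set.Ioi (0:ℝ))) :=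
      hmeas.subtype_mk
    exact ((continuousOn_iff_continuous_restrict.mp hmcont).measurable).comp h1
  -- P {Ctil = c} = 0
  have hmle : ∀ a, MeasurableSet {ω | Ctil ω ≤ a} := fun a =>
    hmeas (measurableSet_Iic)
  have hmlt : MeasurableSet {ω | Ctil ω < c} := hmeas (measurableSet_Iio)
  have hFlt : (P {ω | Ctil ω < c}).toReal = F c := by
    have hsub : ∀ n : ℕ, {ω | Ctil ω ≤ c - 1/(n+1)} ⊆ {ω | Ctil ω ≤ c - 1/(n+2)} := by
      intro n ω hω
      simp only [Set.mem_setOf_eq] at *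
      have : (1:ℝ)/(n+2) ≤ 1/(n+1) := by
        apply one_div_le_one_div_of_le
        · positivity
        · linarith
      linarith
    have hUnion : (⋃ n : ℕ, {ω | Ctil ω ≤ c - 1/(n+1)}) = {ω | Ctil ω < c} := by
      ext ω
      simp only [Set.mem_iUnion, Set.mem_setOf_eq]
      constructor
      · rintro ⟨n, hn⟩
        have : (0:ℝ) < 1/(n+1) := by positivity
        linarith
      · intro hω
        obtain ⟨n, hn⟩ := exists_nat_one_div_lt (show (0:ℝ) < c - Ctil ω by linarith)
        exact ⟨n, by linarith⟩
    have hmono' : Monotone (fun n : ℕ => {ω | Ctil ω ≤ c - 1/(n+1)}) := by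
      apply monotone_nat_of_le_succ
      intro n
      exact_mod_cast hsub n
    have htend : Filter.Tendsto (fun n : ℕ => P {ω | Ctil ω ≤ c - 1/(n+1)})
        Filter.atTop (nhds (P {ω | Ctil ω < c})) := by
      rw [← hUnion]
      exact tendsto_measure_iUnion_atTop hmono'
    have htendR : Filter.Tendsto (fun n : ℕ => (P {ω | Ctil ω ≤ c - 1/(n+1)}).toReal)
        Filter.atTop (nhds ((P {ω | Ctil ω < c}).toReal)) :=
      (ENNReal.tendsto_toReal (measure_ne_top P _)).comp htend
    have harg : Filter.Tendsto (fun n : ℕ => c - 1/((n:ℝ)+1)) Filter.atTop (nhds c) := by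
      have : Filter.Tendsto (fun n : ℕ => 1/((n:ℝ)+1)) Filter.atTop (nhds 0) :=
        tendsto_one_div_add_atTop_nhds_zero_nat
      simpa using (tendsto_const_nhds (x := c)).sub this
    have htendF : Filter.Tendsto (fun n : ℕ => F (c - 1/((n:ℝ)+1)))
        Filter.atTop (nhds (F c)) := (hFcontAt.tendsto).comp harg
    have heq : ∀ n : ℕ, F (c - 1/((n:ℝ)+1)) = (P {ω | Ctil ω ≤ c - 1/(n+1)}).toReal :=
      fun n => hF _
    rw [show (fun n : ℕ => F (c - 1/((n:ℝ)+1)))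
        = fun n : ℕ => (P {ω | Ctil ω ≤ c - 1/(n+1)}).toReal from funext heq] at htendF
    exact tendsto_nhds_unique htendR htendF
  have hatom : P {ω | Ctil ω = c} = 0 := by
    have hle : P {ω | Ctil ω < c} ≤ P {ω | Ctil ω ≤ c} :=
      measure_mono (fun ω (hω : Ctil ω < c) => le_of_lt hω)
    have heqm : P {ω | Ctil ω < c} = P {ω | Ctil ω ≤ c} := by
      have h1 : (P {ω | Ctil ω < c}).toReal = (P {ω | Ctil ω ≤ c}).toReal := by
        rw [hFlt, hF]
      exact (ENNReal.toReal_eq_toReal_iff' (measure_ne_top P _) (measure_ne_top P _)).mp h1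
    have hset : {ω | Ctil ω = c} = {ω | Ctil ω ≤ c} \ {ω | Ctil ω < c} := by
      ext ω
      simp only [Set.mem_setOf_eq, Set.mem_diff, not_lt]
      constructor
      · rintro rfl; exact ⟨le_refl _, le_refl _⟩
      · rintro ⟨h1, h2⟩; exact le_antisymm h1 h2
    have hsub2 : {ω | Ctil ω < c} ⊆ {ω | Ctil ω ≤ c} :=
      Set.setOf_subset_setOf.mpr (fun ω hω => le_of_lt hω)
    rw [hset, measure_diff hsub2 hmlt.nullMeasurableSet
      (measure_ne_top P _), ← heqm, tsub_self]
  -- a.e. X ≠ t₀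
  have hae : ∀ᵐ ω ∂P, X ω ≠ t₀ := by
    rw [MeasureTheory.ae_iff]
    apply measure_mono_null _ hatom
    intro ω hω
    have hx : X ω = t₀ := not_not.mp hω
    exact hmono.injOn (Set.mem_Ioi.mpr (hCpos ω)) (Set.mem_Ioi.mpr hc) hx
  -- Lipschitz bound on gl
  have hlip : ∀ a b : ℝ, |gl a - gl b| ≤ lam * |a - b| := by
    intro a b
    rw [hgl a, hgl b]
    have h1 := le_abs_self (a - b)
    have h2 := neg_abs_le (a - b)
    have h3 := abs_nonneg (a - b)
    split_ifs with ha hb hb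
    · rw [abs_le]; constructor <;> nlinarith
    · push_neg at hb
      rw [abs_le]; constructor <;> nlinarith
    · push_neg at ha
      rw [abs_le]; constructor <;> nlinarith
    · push_neg at ha hb
      rw [abs_le]; constructor <;> nlinarith
  -- main parametric-integral derivative
  set F' : Ω → ℝ := fun ω => if X ω < t₀ then 1 else lam with hF'
  have hmain : HasDerivAt (fun t => ∫ ω, gl (t - X ω) ∂P) (∫ ω, F' ω ∂P) t₀ := by
    have hmeas' : ∀ᶠ x in nhds t₀, AEStronglyMeasurable (fun ω => gl (x - X ω)) P :=
      Filter.Eventually.of_forall fun x =>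
        (hglcont.measurable.comp ((measurable_const.sub hXmeas))).aestronglyMeasurable
    have hint0 : Integrable (fun ω => gl (t₀ - X ω)) P := by
      have hb : Integrable (fun ω => lam * |t₀ - X ω|) P :=
        (((integrable_const t₀).sub hInt).abs).const_mul lam
      apply Integrable.mono' hb
        ((hglcont.measurable.comp (measurable_const.sub hXmeas)).aestronglyMeasurable)
      filter_upwards with ω
      have := hlip (t₀ - X ω) 0
      have hgl0 : gl 0 = 0 := by rw [hgl]; simp
      rw [hgl0, sub_zero, sub_zero] at this
      simpa [Real.norm_eq_abs] using this
    have hF'meas : AEStronglyMeasurable F' P := by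
      apply Measurable.aestronglyMeasurable
      exact Measurable.ite (measurableSet_lt hXmeas measurable_const)
        measurable_const measurable_const
    have hlipOn : ∀ᵐ ω ∂P, LipschitzOnWith (Real.nnabs lam)
        (fun t => gl (t - X ω)) (Metric.ball t₀ 1) := by
      filter_upwards with ω
      apply LipschitzWith.lipschitzOnWith
      apply LipschitzWith.of_dist_le_mul
      intro s t
      rw [Real.dist_eq, Real.dist_eq]
      have h := hlip (s - X ω) (t - X ω)
      have : s - X ω - (t - X ω) = s - t := by ring
      rw [this] at h
      calc |gl (s - X ω) - gl (t - X ω)| ≤ lam * |s - t| := h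
        _ = (Real.nnabs lam : ℝ) * |s - t| := by
            rw [Real.coe_nnabs, abs_of_pos hlam0]
    have hdiff : ∀ᵐ ω ∂P, HasDerivAt (fun t => gl (t - X ω)) (F' ω) t₀ := by
      filter_upwards [hae] with ω hne
      by_cases h : X ω < t₀
      · have base : HasDerivAt (fun t => t - X ω) 1 t₀ :=
          (hasDerivAt_id t₀).sub_const _
        have heq : (fun t => gl (t - X ω)) =ᶠ[nhds t₀] (fun t => t - X ω) := by
          filter_upwards [eventually_gt_nhds h] with t ht
          rw [hgl]
          exact if_pos (by linarith)
        have : HasDerivAt (fun t => gl (t - X ω)) 1 t₀ := base.congr_of_eventuallyEq heq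
        simpa [hF', if_pos h] using this
      · have h' : t₀ < X ω := lt_of_le_of_ne (not_lt.mp h) (Ne.symm hne)
        have base : HasDerivAt (fun t => lam * (t - X ω)) lam t₀ := by
          have := ((hasDerivAt_id t₀).sub_const (X ω)).const_mul lam
          simpa using this
        have heq : (fun t => gl (t - X ω)) =ᶠ[nhds t₀] (fun t => lam * (t - X ω)) := by
          filter_upwards [eventually_lt_nhds h'] with t ht
          rw [hgl]
          exact if_neg (by push_neg; linarith)
        have : HasDerivAt (fun t => gl (t - X ω)) lam t₀ := base.congr_of_eventuallyEq heq
        simpa [hF', if_neg h] using this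
    exact (hasDerivAt_integral_of_dominated_loc_of_lip (Metric.ball_mem_nhds t₀ one_pos) hmeas' hint0 hF'meas
      hlipOn (integrable_const lam) hdiff).2
  -- compute the integral of F'
  have hsetX : {ω | X ω < t₀} = {ω | Ctil ω < c} := by
    ext ω
    simp only [Set.mem_setOf_eq, hX, ht₀]
    constructor
    · intro h
      by_contra hcon
      push_neg at hcon
      rcases eq_or_lt_of_le hcon with heq | hlt
      · rw [← heq] at h; exact lt_irrefl _ h
      · exact absurd (hmono (Set.mem_Ioi.mpr hc) (Set.mem_Ioi.mpr (hCpos ω)) hlt)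
          (not_lt.mpr (le_of_lt h))
    · intro h
      exact hmono (Set.mem_Ioi.mpr (hCpos ω)) (Set.mem_Ioi.mpr hc) h
  have hintF' : (∫ ω, F' ω ∂P) = F c + lam * (1 - F c) := by
    have hrw : F' = fun ω => lam + Set.indicator {ω | X ω < t₀} (fun _ => 1 - lam) ω := by
      funext ω
      simp only [hF']
      by_cases h : X ω < t₀
      · rw [if_pos h, Set.indicator_of_mem (show ω ∈ {ω | X ω < t₀} from h)]
        ring
      · rw [if_neg h, Set.indicator_of_notMem (show ω ∉ {ω | X ω < t₀} from h)]
        ring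
    have hsmeas : MeasurableSet {ω | X ω < t₀} := measurableSet_lt hXmeas measurable_const
    rw [hrw, integral_add (integrable_const lam)
      ((integrable_const (1 - lam)).indicator hsmeas)]
    rw [integral_const, integral_indicator_const _ hsmeas]
    rw [hsetX, measureReal_def, measureReal_def, hFlt]
    simp [measure_univ]
    ring
  -- conclude by composition with m
  have hmderiv : HasDerivAt m (deriv m c) c := (hmdiff c (Set.mem_Ioi.mpr hc)).hasDerivAt
  have hcomp := hmain.comp c hmderiv
  rw [hintF'] at hcomp
  exact hcomp
end

section
/- Let W(x; b, λ) = 1 + bF(x) + bλ(1−F(x)) and define R_f(b, λ) = W(ε_{c,t}; b, λ) / (β E[ε_c^{−θ} W(ε_c; b, λ)]) for a positive integrable random variable ε_c with CDF F, constants β ∈ (0,1), θ > 0, b > 0, λ ≥ 1, and a fixed real ε_{c,t}. If F(ε_{c,t}) > E[ε_c^{−θ} F(ε_c)] / E[ε_c^{−θ}], then R_f is strictly decreasing in λ; if F(ε_{c,t}) < E[ε_c^{−θ} F(ε_c)] / E[ε_c^{−θ}], then R_f is strictly increasing in λ. -/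
open MeasureTheory

/-- Comparative statics of the Model II risk-free rate with respect to loss aversion λ:
with `W(x; b, λ) = 1 + bF(x) + bλ(1−F(x))` and
`R_f(λ) = W(ε_{c,t}; b, λ) / (β E[ε_c^{−θ} W(ε_c; b, λ)])`, if
`F(ε_{c,t}) > E[ε_c^{−θ} F(ε_c)]/E[ε_c^{−θ}]` then `R_f` is strictly decreasing in
`λ` on `[1,∞)`; if the reverse strict inequality holds, it is strictly increasing. -/
theorem riskFree_comparative_statics_lossAversion
    {Ω : Type*} [MeasurableSpace Ω] (P : Measure Ω) [IsProbabilityMeasure P]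
    (β θ b : ℝ) (hβ : β ∈ Set.Ioo (0 : ℝ) 1) (hθ : 0 < θ) (hb : 0 < b)
    (F : ℝ → ℝ) (hFmono : Monotone F) (hF01 : ∀ x, F x ∈ Set.Icc (0 : ℝ) 1)
    (εc : Ω → ℝ) (hεpos : ∀ ω, 0 < εc ω)
    (hInt0 : Integrable (fun ω => (εc ω) ^ (-θ)) P)
    (hIntF : Integrable (fun ω => (εc ω) ^ (-θ) * F (εc ω)) P)
    (x : ℝ) :
    (F x > (∫ ω, (εc ω) ^ (-θ) * F (εc ω) ∂P) / (∫ ω, (εc ω) ^ (-θ) ∂P) →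
      StrictAntiOn (fun lam =>
        (1 + b * F x + b * lam * (1 - F x)) /
        (β * ∫ ω, (εc ω) ^ (-θ) *
          (1 + b * F (εc ω) + b * lam * (1 - F (εc ω))) ∂P)) (Set.Ici (1 : ℝ))) ∧
    (F x < (∫ ω, (εc ω) ^ (-θ) * F (εc ω) ∂P) / (∫ ω, (εc ω) ^ (-θ) ∂P) →
      StrictMonoOn (fun lam =>
        (1 + b * F x + b * lam * (1 - F x)) /
        (β * ∫ ω, (εc ω) ^ (-θ) *
          (1 + b * F (εc ω) + b * lam * (1 - F (εc ω))) ∂P)) (Set.Ici (1 : ℝ))) := by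
  obtain ⟨hβ0, hβ1⟩ := hβ
  set A : ℝ := ∫ ω, (εc ω) ^ (-θ) ∂P with hA_def
  set B : ℝ := ∫ ω, (εc ω) ^ (-θ) * F (εc ω) ∂P with hB_def
  have hpow_pos : ∀ ω, 0 < (εc ω) ^ (-θ) := fun ω => Real.rpow_pos_of_pos (hεpos ω) _
  have hA : 0 < A := by
    rw [hA_def, integral_pos_iff_support_of_nonneg_ae]
    · have : (Function.support fun ω => (εc ω) ^ (-θ)) = Set.univ := by
        ext ω; simp [Function.mem_support, (hpow_pos ω).ne']
      rw [this]; simp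
    · exact Filter.Eventually.of_forall (fun ω => (hpow_pos ω).le)
    · exact hInt0
  have hB0 : 0 ≤ B :=
    integral_nonneg fun ω => mul_nonneg (hpow_pos ω).le (hF01 (εc ω)).1
  have hBA : B ≤ A := by
    apply integral_mono hIntF hInt0
    intro ω
    have h1 := (hF01 (εc ω)).2
    show εc ω ^ (-θ) * F (εc ω) ≤ εc ω ^ (-θ)
    nlinarith [mul_nonneg (hpow_pos ω).le (sub_nonneg.mpr h1)]
  have key : ∀ lam : ℝ, (∫ ω, (εc ω) ^ (-θ) *
      (1 + b * F (εc ω) + b * lam * (1 - F (εc ω))) ∂P) = A + b * B + b * lam * (A - B) := by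
    intro lam
    have heq : (fun ω => (εc ω) ^ (-θ) * (1 + b * F (εc ω) + b * lam * (1 - F (εc ω)))) =
        fun ω => (1 + b * lam) * ((εc ω) ^ (-θ)) + (b - b * lam) * ((εc ω) ^ (-θ) * F (εc ω)) := by
      funext ω; ring
    rw [heq, integral_add ((hInt0.const_mul _)) ((hIntF.const_mul _)),
      integral_const_mul, integral_const_mul, ← hA_def, ← hB_def]
    ring
  have hden : ∀ lam : ℝ, 1 ≤ lam → 0 < β * (A + b * B + b * lam * (A - B)) := by
    intro lam hlam
    have h1 : 0 ≤ b * lam * (A - B) := by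
      apply mul_nonneg (mul_nonneg hb.le (by linarith)) (by linarith)
    positivity
  constructor
  · intro hFx a ha c hc hac
    simp only [Set.mem_Ici] at ha hc
    have hu : B < F x * A := (div_lt_iff₀ hA).mp hFx
    simp only [key]
    rw [div_lt_div_iff₀ (hden c hc) (hden a ha)]
    nlinarith [mul_pos (mul_pos (mul_pos (mul_pos hβ0 hb) (sub_pos.mpr hac))
      (by linarith : (0:ℝ) < 1 + b)) (sub_pos.mpr hu)]
  · intro hFx a ha c hc hac
    simp only [Set.mem_Ici] at ha hc
    have hu : F x * A < B := (lt_div_iff₀ hA).mp hFx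
    simp only [key]
    rw [div_lt_div_iff₀ (hden a ha) (hden c hc)]
    nlinarith [mul_pos (mul_pos (mul_pos (mul_pos hβ0 hb) (sub_pos.mpr hac))
      (by linarith : (0:ℝ) < 1 + b)) (sub_pos.mpr hu)]
end

section
/- Let W(x; b, λ) = 1 + bF(x) + bλ(1−F(x)) and define R_f(b, λ) = W(ε_{c,t}; b, λ) / (β E[ε_c^{−θ} W(ε_c; b, λ)]) for a positive integrable random variable ε_c with CDF F, constants β ∈ (0,1), θ > 0, λ > 1, b ≥ 0, and a fixed real ε_{c,t}. If F(ε_{c,t}) > E[ε_c^{−θ} F(ε_c)] / E[ε_c^{−θ}], then R_f is strictly decreasing in b; if the reverse strict inequality holds, R_f is strictly increasing in b. -/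
open MeasureTheory

/-- Comparative statics of the Model II risk-free rate with respect to the gain-loss
weight b: with `W(x; b, λ) = 1 + bF(x) + bλ(1−F(x))` and
`R_f(b) = W(ε_{c,t}; b, λ) / (β E[ε_c^{−θ} W(ε_c; b, λ)])`, if
`F(ε_{c,t}) > E[ε_c^{−θ} F(ε_c)]/E[ε_c^{−θ}]` then `R_f` is strictly decreasing in `b`
on `[0,∞)`; if the reverse strict inequality holds, it is strictly increasing. -/
theorem riskFree_comparative_statics_weight
    {Ω : Type*} [MeasurableSpace Ω] (P : Measure Ω) [IsProbabilityMeasure P]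
    (β θ lam : ℝ) (hβ : β ∈ Set.Ioo (0 : ℝ) 1) (hθ : 0 < θ) (hlam : 1 < lam)
    (F : ℝ → ℝ) (hFmono : Monotone F) (hF01 : ∀ x, F x ∈ Set.Icc (0 : ℝ) 1)
    (εc : Ω → ℝ) (hεpos : ∀ ω, 0 < εc ω)
    (hInt0 : Integrable (fun ω => (εc ω) ^ (-θ)) P)
    (hIntF : Integrable (fun ω => (εc ω) ^ (-θ) * F (εc ω)) P)
    (x : ℝ) :
    (F x > (∫ ω, (εc ω) ^ (-θ) * F (εc ω) ∂P) / (∫ ω, (εc ω) ^ (-θ) ∂P) →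
      StrictAntiOn (fun b =>
        (1 + b * F x + b * lam * (1 - F x)) /
        (β * ∫ ω, (εc ω) ^ (-θ) *
          (1 + b * F (εc ω) + b * lam * (1 - F (εc ω))) ∂P)) (Set.Ici (0 : ℝ))) ∧
    (F x < (∫ ω, (εc ω) ^ (-θ) * F (εc ω) ∂P) / (∫ ω, (εc ω) ^ (-θ) ∂P) →
      StrictMonoOn (fun b =>
        (1 + b * F x + b * lam * (1 - F x)) /
        (β * ∫ ω, (εc ω) ^ (-θ) *
          (1 + b * F (εc ω) + b * lam * (1 - F (εc ω))) ∂P)) (Set.Ici (0 : ℝ))) := by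

  obtain ⟨hβ0, hβ1⟩ := hβ
  set A := ∫ ω, (εc ω) ^ (-θ) ∂P with hAdef
  set B := ∫ ω, (εc ω) ^ (-θ) * F (εc ω) ∂P with hBdef
  have hA : 0 < A := by
    rw [hAdef, integral_pos_iff_support_of_nonneg
      (fun ω => le_of_lt (Real.rpow_pos_of_pos (hεpos ω) _)) hInt0]
    have : Function.support (fun ω => (εc ω) ^ (-θ)) = Set.univ := by
      ext ω; simp [Function.mem_support, ne_of_gt (Real.rpow_pos_of_pos (hεpos ω) (-θ))]
    rw [this]
    simp
  have hB0 : 0 ≤ B := by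
    apply integral_nonneg
    intro ω
    exact mul_nonneg (le_of_lt (Real.rpow_pos_of_pos (hεpos ω) _)) (hF01 _).1
  have hBA : B ≤ A := by
    apply integral_mono hIntF hInt0
    intro ω
    calc (εc ω) ^ (-θ) * F (εc ω) ≤ (εc ω) ^ (-θ) * 1 :=
          mul_le_mul_of_nonneg_left (hF01 _).2 (le_of_lt (Real.rpow_pos_of_pos (hεpos ω) _))
      _ = (εc ω) ^ (-θ) := mul_one _
  have key : ∀ b : ℝ, (∫ ω, (εc ω) ^ (-θ) *
      (1 + b * F (εc ω) + b * lam * (1 - F (εc ω))) ∂P)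
      = (1 + b * lam) * A + b * (1 - lam) * B := by
    intro b
    have heq : (fun ω => (εc ω) ^ (-θ) * (1 + b * F (εc ω) + b * lam * (1 - F (εc ω))))
        = fun ω => (1 + b * lam) * ((εc ω) ^ (-θ)) +
            (b * (1 - lam)) * ((εc ω) ^ (-θ) * F (εc ω)) := by
      funext ω; ring
    rw [heq, integral_add (hInt0.const_mul _) (hIntF.const_mul _),
      integral_const_mul, integral_const_mul]
  have hD : ∀ b : ℝ, 0 ≤ b → 0 < (1 + b * lam) * A + b * (1 - lam) * B := by
    intro b hb
    nlinarith [mul_nonneg hb (sub_nonneg.2 hBA), mul_nonneg hb hB0]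
  constructor
  · intro hcond a ha b hb hab
    have hBF : B < A * F x := by
      have := (div_lt_iff₀ hA).mp hcond
      linarith [this]
    simp only
    rw [key a, key b, div_lt_div_iff₀ (mul_pos hβ0 (hD b hb)) (mul_pos hβ0 (hD a ha))]
    nlinarith [mul_pos (mul_pos (mul_pos hβ0 (sub_pos.2 hab)) (sub_pos.2 hlam))
      (sub_pos.2 hBF)]
  · intro hcond a ha b hb hab
    have hBF : A * F x < B := by
      have := (lt_div_iff₀ hA).mp hcond
      linarith [this]
    simp only
    rw [key a, key b, div_lt_div_iff₀ (mul_pos hβ0 (hD a ha)) (mul_pos hβ0 (hD b hb))]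
    nlinarith [mul_pos (mul_pos (mul_pos hβ0 (sub_pos.2 hab)) (sub_pos.2 hlam))
      (sub_pos.2 hBF)]
end

section
/- Let W(x; λ) = 1 + bF(x) + bλ(1−F(x)) with b > 0, and define PD(λ) = β E[ε_c^{−θ} ε_d W(ε_c; λ)] / ( W(ε_{c,t}; λ) (1 − β E[ε_c^{−θ} ε_d]) ), where ε_c, ε_d > 0 with E[ε_c^{−θ}ε_d] finite and β E[ε_c^{−θ}ε_d] < 1. If F(ε_{c,t}) > E[ε_c^{−θ} ε_d F(ε_c)] / E[ε_c^{−θ} ε_d], then PD is strictly increasing in λ on (1,∞); if the reverse strict inequality holds, PD is strictly decreasing in λ. -/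
open MeasureTheory

/-- Comparative statics of the Model II price-dividend ratio with respect to loss
aversion λ: with `W(x; λ) = 1 + bF(x) + bλ(1−F(x))`, `b > 0`, and
`PD(λ) = β E[ε_c^{−θ} ε_d W(ε_c; λ)] / (W(ε_{c,t}; λ)(1 − β E[ε_c^{−θ} ε_d]))`, if
`F(ε_{c,t}) > E[ε_c^{−θ} ε_d F(ε_c)]/E[ε_c^{−θ} ε_d]` then `PD` is strictly
increasing in `λ` on `(1,∞)`; if the reverse strict inequality holds, it is strictly
decreasing. -/
theorem priceDividend_comparative_statics_lossAversion
    {Ω : Type*} [MeasurableSpace Ω] (P : Measure Ω) [IsProbabilityMeasure P]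
    (β θ b : ℝ) (hβ : β ∈ Set.Ioo (0 : ℝ) 1) (hθ : 0 < θ) (hb : 0 < b)
    (F : ℝ → ℝ) (hFmono : Monotone F) (hF01 : ∀ x, F x ∈ Set.Icc (0 : ℝ) 1)
    (εc εd : Ω → ℝ) (hεcpos : ∀ ω, 0 < εc ω) (hεdpos : ∀ ω, 0 < εd ω)
    (hIntB : Integrable (fun ω => (εc ω) ^ (-θ) * εd ω) P)
    (hIntF : Integrable (fun ω => (εc ω) ^ (-θ) * εd ω * F (εc ω)) P)
    (hgrowth : β * ∫ ω, (εc ω) ^ (-θ) * εd ω ∂P < 1)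
    (x : ℝ) :
    (F x > (∫ ω, (εc ω) ^ (-θ) * εd ω * F (εc ω) ∂P) /
        (∫ ω, (εc ω) ^ (-θ) * εd ω ∂P) →
      StrictMonoOn (fun lam =>
        (β * ∫ ω, (εc ω) ^ (-θ) * εd ω *
            (1 + b * F (εc ω) + b * lam * (1 - F (εc ω))) ∂P) /
        ((1 + b * F x + b * lam * (1 - F x)) *
          (1 - β * ∫ ω, (εc ω) ^ (-θ) * εd ω ∂P))) (Set.Ioi (1 : ℝ))) ∧
    (F x < (∫ ω, (εc ω) ^ (-θ) * εd ω * F (εc ω) ∂P) /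
        (∫ ω, (εc ω) ^ (-θ) * εd ω ∂P) →
      StrictAntiOn (fun lam =>
        (β * ∫ ω, (εc ω) ^ (-θ) * εd ω *
            (1 + b * F (εc ω) + b * lam * (1 - F (εc ω))) ∂P) /
        ((1 + b * F x + b * lam * (1 - F x)) *
          (1 - β * ∫ ω, (εc ω) ^ (-θ) * εd ω ∂P))) (Set.Ioi (1 : ℝ))) := by
  set A := ∫ ω, (εc ω) ^ (-θ) * εd ω ∂P with hA
  set C := ∫ ω, (εc ω) ^ (-θ) * εd ω * F (εc ω) ∂P with hC
  have hApos : 0 < A := by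
    rw [hA, integral_pos_iff_support_of_nonneg_ae _ hIntB]
    · have : Function.support (fun ω => (εc ω) ^ (-θ) * εd ω) = Set.univ := by
        ext ω
        have h1 := hεcpos ω
        have h2 := hεdpos ω
        simp only [Function.mem_support, Set.mem_univ, iff_true]
        positivity
      rw [this]
      simp
    · filter_upwards with ω
      have h1 := hεcpos ω
      have h2 := hεdpos ω
      positivity
  have hden : 0 < 1 - β * A := by linarith
  have key : ∀ lam : ℝ, ∫ ω, (εc ω) ^ (-θ) * εd ω *
      (1 + b * F (εc ω) + b * lam * (1 - F (εc ω))) ∂P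
      = (1 + b * lam) * A + (b * (1 - lam)) * C := by
    intro lam
    have heq : (fun ω => (εc ω) ^ (-θ) * εd ω *
        (1 + b * F (εc ω) + b * lam * (1 - F (εc ω))))
        = fun ω => (1 + b * lam) * ((εc ω) ^ (-θ) * εd ω)
          + (b * (1 - lam)) * ((εc ω) ^ (-θ) * εd ω * F (εc ω)) := by
      funext ω; ring
    rw [heq, integral_add (hIntB.const_mul _) (hIntF.const_mul _),
      integral_const_mul, integral_const_mul, hA, hC]
  obtain ⟨hF0, hF1⟩ := hF01 x
  have hβpos := hβ.1
  have hD : ∀ lam : ℝ, 1 < lam →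
      0 < (1 + b * F x + b * lam * (1 - F x)) * (1 - β * A) := by
    intro lam hlam
    have h1 : 0 ≤ b * F x := by positivity
    have h2 : 0 ≤ b * lam * (1 - F x) := by
      apply mul_nonneg (by nlinarith) (by linarith)
    nlinarith
  constructor
  · intro hgt l1 hl1 l2 hl2 hl
    simp only [Set.mem_Ioi] at hl1 hl2
    have hgt' : C < A * F x := by
      rw [gt_iff_lt, div_lt_iff₀ hApos] at hgt
      linarith
    simp only
    rw [key l1, key l2, div_lt_div_iff₀ (hD l1 hl1) (hD l2 hl2)]
    nlinarith [mul_pos (mul_pos (mul_pos (mul_pos hβpos hden)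
      (sub_pos.2 hl)) (mul_pos hb (by linarith : (0:ℝ) < 1 + b)))
      (sub_pos.2 hgt')]
  · intro hlt l1 hl1 l2 hl2 hl
    simp only [Set.mem_Ioi] at hl1 hl2
    have hlt' : A * F x < C := by
      rw [lt_div_iff₀ hApos] at hlt
      linarith
    simp only
    rw [key l1, key l2, div_lt_div_iff₀ (hD l2 hl2) (hD l1 hl1)]
    nlinarith [mul_pos (mul_pos (mul_pos (mul_pos hβpos hden)
      (sub_pos.2 hl)) (mul_pos hb (by linarith : (0:ℝ) < 1 + b)))
      (sub_pos.2 hlt')]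
end

section
/- In Model II, the stock return R_{S,t+1} = (S_{t+1}/D_{t+1} + 1)/(S_t/D_t) · ε_{d,t+1}, with S_t/D_t given by the equilibrium formula S_t/D_t = β A / ( W(ε_{c,t}) (1 − βB) ) where A = E[ε_c^{−θ} ε_d W(ε_c)], B = E[ε_c^{−θ} ε_d] (both independent of t by the i.i.d. assumption), equals W(ε_{c,t}) ε_{d,t+1} ( (1 − βB)/(βA) + 1/W(ε_{c,t+1}) ). Consequently, the Euler equation E_t[ β ε_{c,t+1}^{−θ} W(ε_{c,t+1}) R_{S,t+1} ] = W(ε_{c,t}) holds. -/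
open MeasureTheory

/-- In Model II, with the equilibrium price-dividend ratio
`S_t/D_t = βA/(W(ε_{c,t})(1 − βB))` where `A = E[ε_c^{−θ} ε_d W(ε_c)]` and
`B = E[ε_c^{−θ} ε_d]`, the stock return
`R_S = (S_{t+1}/D_{t+1} + 1)/(S_t/D_t)·ε_{d,t+1}` equals
`W(ε_{c,t}) ε_{d,t+1} ((1 − βB)/(βA) + 1/W(ε_{c,t+1}))`, and the Euler equation
`E_t[β ε_{c,t+1}^{−θ} W(ε_{c,t+1}) R_S] = W(ε_{c,t})` holds. -/
theorem stock_return_formula_and_euler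
    {Ω : Type*} [MeasurableSpace Ω] (P : Measure Ω) [IsProbabilityMeasure P]
    (β θ b lam : ℝ) (hβ : β ∈ Set.Ioo (0 : ℝ) 1) (hθ : 0 < θ)
    (hb : 0 ≤ b) (hlam : 1 ≤ lam)
    (F : ℝ → ℝ) (hF01 : ∀ x, F x ∈ Set.Icc (0 : ℝ) 1)
    (W : ℝ → ℝ) (hW : ∀ x, W x = 1 + b * F x + b * lam * (1 - F x))
    (εc εd : Ω → ℝ) (hεcpos : ∀ ω, 0 < εc ω) (hεdpos : ∀ ω, 0 < εd ω)
    (A B : ℝ)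
    (hA : A = ∫ ω, (εc ω) ^ (-θ) * εd ω * W (εc ω) ∂P) (hApos : 0 < A)
    (hB : B = ∫ ω, (εc ω) ^ (-θ) * εd ω ∂P) (hBgrowth : β * B < 1)
    (hIntA : Integrable (fun ω => (εc ω) ^ (-θ) * εd ω * W (εc ω)) P)
    (hIntB : Integrable (fun ω => (εc ω) ^ (-θ) * εd ω) P) :
    -- (a) the stock return formula, for any realizations of current and next-period
    -- consumption growth `xt, xt1` and dividend growth `d`:
    (∀ xt xt1 d : ℝ,
      (β * A / (W xt1 * (1 - β * B)) + 1) / (β * A / (W xt * (1 - β * B))) * d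
        = W xt * d * ((1 - β * B) / (β * A) + 1 / W xt1)) ∧
    -- (b) the Euler equation for the stock:
    (∀ xt : ℝ,
      ∫ ω, β * (εc ω) ^ (-θ) * W (εc ω) *
          (W xt * εd ω * ((1 - β * B) / (β * A) + 1 / W (εc ω))) ∂P
        = W xt) := by
  have hWpos : ∀ x, 0 < W x := by
    intro x
    have h1 := (hF01 x).1
    have h2 := (hF01 x).2
    have := mul_nonneg hb h1
    have := mul_nonneg (mul_nonneg hb (le_trans zero_le_one hlam)) (by linarith : (0:ℝ) ≤ 1 - F x)
    rw [hW]; linarith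
  have hβA : β * A ≠ 0 := mul_ne_zero (ne_of_gt hβ.1) hApos.ne'
  have h1B : (1 : ℝ) - β * B ≠ 0 := by linarith
  have hβ0 : β ≠ 0 := ne_of_gt hβ.1
  constructor
  · intro xt xt1 d
    have h1 := (hWpos xt).ne'
    have h2 := (hWpos xt1).ne'
    field_simp
    ring
  · intro xt
    have hpt : ∀ ω, β * (εc ω) ^ (-θ) * W (εc ω) *
          (W xt * εd ω * ((1 - β * B) / (β * A) + 1 / W (εc ω)))
        = (W xt * (β * (1 - β * B) / (β * A))) * ((εc ω) ^ (-θ) * εd ω * W (εc ω))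
          + (W xt * β) * ((εc ω) ^ (-θ) * εd ω) := by
      intro ω
      have h := (hWpos (εc ω)).ne'
      field_simp
    simp_rw [hpt]
    rw [integral_add (hIntA.const_mul _) (hIntB.const_mul _),
      integral_const_mul, integral_const_mul, ← hA, ← hB]
    field_simp
    ring
end
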